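/- Let ψ : ℝ^d × ℝ^m → ℝ with ∇_x ψ continuously differentiable in a neighborhood of (x*, θ*), ∇_x ψ(x*, θ*) = 0, and ∇²_x ψ(x*, θ*) invertible; let R : ℝ^d → ℝ be twice continuously differentiable; and let x(θ, λ) denote the locally unique continuously differentiable solution of ∇_x ψ(x, θ) + λ·∇R(x) = 0 with x(θ*, 0) = x*. Let ξ_1, ξ_2, … be i.i.d. with law P, let IF_θ : Ξ → ℝ^m be measurable with E_P[IF_θ(ξ)] = 0 and finite covariance, and suppose estimators θ̂_n satisfy θ̂_n − θ* = (1/n)·Σ_{i=1}^n IF_θ(ξ_i) + r_n with √n·r_n → 0 in probability. Then for any sequence λ_n → 0, the regularized parametric solutions x̂_n = x(θ̂_n, λ_n) satisfy x̂_n − x* = −(∇²_x ψ(x*, θ*))^{−1}·∇_{xθ} ψ(x*, θ*)·(1/n)·Σ_{i=1}^n IF_θ(ξ_i) − λ_n·(∇²_x ψ(x*, θ*))^{−1}·∇R(x*) + s_n, where s_n/(n^{−1/2} + |λ_n|) → 0 in probability. -/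

import Mathlib

open MeasureTheory ProbabilityTheory Filter
open scoped Topology ENNReal

/-!
Differentiating `∇_x ψ(x(θ, λ), θ) + λ ∇R(x(θ, λ)) = 0` at `(θ*, 0)` gives
`Dx(w, t) = -(∇²_x ψ)⁻¹ (∇_{xθ} ψ w + t ∇R(x*))`. Since `E‖Σ_{i<n} IF_θ(ξ_i)‖² = n E‖IF_θ‖²`,
Markov's inequality makes `θ̂_n - θ*` of order `O_P(n^{-1/2})`, so `(θ̂_n, λ_n) - (θ*, 0)` is
`O_P(n^{-1/2} + |λ_n|)`. This scale tends to zero, hence the first-order Taylor remainder of `x` at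
`(θ̂_n, λ_n)` is `o_P(n^{-1/2} + |λ_n|)`, and so is the contribution `Dx(r_n, 0)` of the
estimator's remainder.
-/

namespace MeasureTheory

def BoundedInProbability {Ω ι : Type*} [MeasurableSpace Ω] (μ : Measure Ω) (X : ι → Ω → ℝ)
    (l : Filter ι) : Prop :=
  ∀ ε : ℝ≥0∞, 0 < ε → ∃ M : ℝ, ∀ᶠ i in l, μ {ω | M ≤ X i ω} ≤ ε

section StochasticOrder

variable {Ω ι E : Type*} [MeasurableSpace Ω] {μ : Measure Ω} {l : Filter ι}
  [NormedAddCommGroup E]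

theorem tendstoInMeasure_zero_iff {X : ι → Ω → E} :
    TendstoInMeasure μ X l (fun _ => 0) ↔
      ∀ ε : ℝ, 0 < ε → ∀ η : ℝ≥0∞, 0 < η → ∀ᶠ i in l, μ {ω | ε ≤ ‖X i ω‖} ≤ η := by
  simp only [tendstoInMeasure_iff_norm, sub_zero, ENNReal.tendsto_nhds_zero]

theorem TendstoInMeasure.of_norm_le_mul {F : Type*} [NormedAddCommGroup F] {X : ι → Ω → E}
    {Y : ι → Ω → F} {C : ℝ} (hY : TendstoInMeasure μ Y l (fun _ => 0))
    (h : ∀ᶠ i in l, ∀ ω, ‖X i ω‖ ≤ C * ‖Y i ω‖) : TendstoInMeasure μ X l (fun _ => 0) := by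
  rw [tendstoInMeasure_zero_iff] at hY ⊢
  intro ε hε η hη
  filter_upwards [hY (ε / (|C| + 1)) (by positivity) η hη, h] with i hi hXY
  refine (measure_mono fun ω (hω : ε ≤ ‖X i ω‖) => ?_).trans hi
  show ε / (|C| + 1) ≤ ‖Y i ω‖
  rw [div_le_iff₀ (by positivity)]
  nlinarith [le_abs_self C, norm_nonneg (Y i ω), hXY ω]

theorem TendstoInMeasure.add {X Y : ι → Ω → E} {f g : Ω → E} (hX : TendstoInMeasure μ X l f)
    (hY : TendstoInMeasure μ Y l g) :
    TendstoInMeasure μ (fun i ω => X i ω + Y i ω) l (fun ω => f ω + g ω) := by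
  rw [tendstoInMeasure_iff_norm] at hX hY ⊢
  intro ε hε
  have hsum := (hX (ε / 2) (half_pos hε)).add (hY (ε / 2) (half_pos hε))
  rw [add_zero] at hsum
  refine tendsto_of_tendsto_of_tendsto_of_le_of_le tendsto_const_nhds hsum (fun _ => bot_le)
    fun i => (measure_mono fun ω (hω : ε ≤ ‖X i ω + Y i ω - (f ω + g ω)‖) => ?_).trans
      (measure_union_le _ _)
  by_contra hnot
  simp only [Set.mem_union, Set.mem_ofPred_eq, not_or, not_le] at hnot
  have := norm_add_le (X i ω - f ω) (Y i ω - g ω)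
  rw [add_sub_add_comm] at hω
  linarith

theorem TendstoInMeasure.boundedInProbability {X : ι → Ω → ℝ}
    (hX : TendstoInMeasure μ X l (fun _ => 0)) : BoundedInProbability μ X l := by
  rw [tendstoInMeasure_zero_iff] at hX
  intro η hη
  refine ⟨1, (hX 1 one_pos η hη).mono fun i hi => (measure_mono fun ω (hω : 1 ≤ X i ω) =>
    show 1 ≤ ‖X i ω‖ from hω.trans (Real.le_norm_self _)).trans hi⟩

theorem boundedInProbability_const (c : ℝ) : BoundedInProbability μ (fun _ _ => c) l :=
  fun _ _ => ⟨c + 1, Eventually.of_forall fun _ => by norm_num⟩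

theorem BoundedInProbability.mono {X Y : ι → Ω → ℝ} (hY : BoundedInProbability μ Y l)
    (h : ∀ᶠ i in l, ∀ ω, X i ω ≤ Y i ω) : BoundedInProbability μ X l := by
  intro η hη
  obtain ⟨M, hM⟩ := hY η hη
  exact ⟨M, (hM.and h).mono fun i ⟨hi, hXY⟩ =>
    (measure_mono fun ω (hω : M ≤ X i ω) => hω.trans (hXY ω)).trans hi⟩

theorem BoundedInProbability.add {X Y : ι → Ω → ℝ} (hX : BoundedInProbability μ X l)
    (hY : BoundedInProbability μ Y l) : BoundedInProbability μ (fun i ω => X i ω + Y i ω) l := by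
  intro η hη
  obtain ⟨M, hM⟩ := hX (η / 2) (ENNReal.half_pos hη.ne')
  obtain ⟨N, hN⟩ := hY (η / 2) (ENNReal.half_pos hη.ne')
  refine ⟨M + N, (hM.and hN).mono fun i ⟨hXi, hYi⟩ => ?_⟩
  have hsub : {ω | M + N ≤ X i ω + Y i ω} ⊆ {ω | M ≤ X i ω} ∪ {ω | N ≤ Y i ω} := by
    intro ω hω
    by_contra hnot
    simp only [Set.mem_union, Set.mem_ofPred_eq, not_or, not_le] at hω hnot
    linarith
  calc μ {ω | M + N ≤ X i ω + Y i ω}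
      ≤ μ {ω | M ≤ X i ω} + μ {ω | N ≤ Y i ω} := (measure_mono hsub).trans (measure_union_le _ _)
    _ ≤ η / 2 + η / 2 := add_le_add hXi hYi
    _ = η := ENNReal.add_halves η

end StochasticOrder

end MeasureTheory

section IIDSums

variable {Ω Ξ : Type*} [MeasurableSpace Ω] [MeasurableSpace Ξ] {μ : Measure Ω}
  {P : Measure Ξ} [IsProbabilityMeasure P] {ξ : ℕ → Ω → Ξ}

theorem aemeasurable_of_map_eq {X : Ω → Ξ} (hX : μ.map X = P) : AEMeasurable X μ :=
  .of_map_ne_zero (hX ▸ IsProbabilityMeasure.ne_zero P)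

theorem memLp_comp_of_map_eq {E : Type*} [NormedAddCommGroup E] {X : Ω → Ξ} (hX : μ.map X = P)
    {f : Ξ → E} {p : ℝ≥0∞} (hf : MemLp f p P) : MemLp (fun ω => f (X ω)) p μ :=
  (memLp_map_measure_iff (hX ▸ hf.1) (aemeasurable_of_map_eq hX)).1 (hX ▸ hf)

theorem integral_sq_sum_comp_of_iIndepFun [IsFiniteMeasure μ] (hindep : iIndepFun ξ μ)
    (hlaw : ∀ i, μ.map (ξ i) = P) {g : Ξ → ℝ} (hmean : ∫ y, g y ∂P = 0) (hg : MemLp g 2 P)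
    (n : ℕ) : ∫ ω, (∑ i ∈ Finset.range n, g (ξ i ω)) ^ 2 ∂μ = n * ∫ y, g y ^ 2 ∂P := by
  have hY : ∀ i, MemLp (fun ω => g (ξ i ω)) 2 μ := fun i => memLp_comp_of_map_eq (hlaw i) hg
  have hYmean : ∀ i, ∫ ω, g (ξ i ω) ∂μ = 0 := fun i => by
    rw [← integral_map (aemeasurable_of_map_eq (hlaw i)) (hlaw i ▸ hg.1), hlaw i, hmean]
  have hYvar : ∀ i, variance (fun ω => g (ξ i ω)) μ = ∫ y, g y ^ 2 ∂P := fun i =>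
    calc variance (fun ω => g (ξ i ω)) μ = variance g (μ.map (ξ i)) :=
          (variance_map (hlaw i ▸ hg.1.aemeasurable) (aemeasurable_of_map_eq (hlaw i))).symm
      _ = ∫ y, g y ^ 2 ∂P := by
          rw [hlaw i, variance_of_integral_eq_zero hg.1.aemeasurable hmean]
  have hYindep : iIndepFun (fun i ω => g (ξ i ω)) μ :=
    hindep.comp₀ (fun _ => g) (fun i => aemeasurable_of_map_eq (hlaw i))
      fun i => hlaw i ▸ hg.1.aemeasurable
  have hSmean : ∫ ω, ∑ i ∈ Finset.range n, g (ξ i ω) ∂μ = 0 := by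
    rw [integral_finsetSum _ fun i _ => (hY i).integrable one_le_two]
    simp [hYmean]
  calc ∫ ω, (∑ i ∈ Finset.range n, g (ξ i ω)) ^ 2 ∂μ
      = variance (fun ω => ∑ i ∈ Finset.range n, g (ξ i ω)) μ :=
        (variance_of_integral_eq_zero (Finset.aemeasurable_fun_sum _
          fun i _ => (hY i).1.aemeasurable) hSmean).symm
    _ = ∑ i ∈ Finset.range n, variance (fun ω => g (ξ i ω)) μ := by
        simpa only [Finset.sum_fn] using IndepFun.variance_sum (s := Finset.range n)
          (fun i _ => hY i) fun i _ j _ hij => hYindep.indepFun hij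
    _ = n * ∫ y, g y ^ 2 ∂P := by simp [hYvar]

theorem integral_norm_sq_sum_comp_of_iIndepFun [IsFiniteMeasure μ] {κ : Type*} [Fintype κ]
    (hindep : iIndepFun ξ μ) (hlaw : ∀ i, μ.map (ξ i) = P) {f : Ξ → EuclideanSpace ℝ κ}
    (hmean : ∫ y, f y ∂P = 0) (hf : MemLp f 2 P) (n : ℕ) :
    ∫ ω, ‖∑ i ∈ Finset.range n, f (ξ i ω)‖ ^ 2 ∂μ = n * ∫ y, ‖f y‖ ^ 2 ∂P := by
  have hcoord : ∀ k, MemLp (fun y => f y k) 2 P := fun k =>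
    (EuclideanSpace.proj (𝕜 := ℝ) k).comp_memLp' hf
  have hcoord_mean : ∀ k, ∫ y, f y k ∂P = 0 := fun k => by
    simpa [hmean] using
      (EuclideanSpace.proj (𝕜 := ℝ) k).integral_comp_comm (hf.integrable one_le_two)
  have hsum : ∀ k, MemLp (fun ω => ∑ i ∈ Finset.range n, f (ξ i ω) k) 2 μ := fun k =>
    memLp_finsetSum (Finset.range n) fun i _ => memLp_comp_of_map_eq (hlaw i) (hcoord k)
  simp_rw [EuclideanSpace.real_norm_sq_eq, WithLp.ofLp_sum, Finset.sum_apply]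
  rw [integral_finsetSum _ fun k _ => (hsum k).integrable_sq,
    integral_finsetSum _ fun k _ => (hcoord k).integrable_sq, Finset.mul_sum]
  exact Finset.sum_congr rfl fun k _ =>
    integral_sq_sum_comp_of_iIndepFun hindep hlaw (hcoord_mean k) (hcoord k) n

theorem meas_norm_sum_div_sqrt_ge_le [IsFiniteMeasure μ] {κ : Type*} [Fintype κ]
    (hindep : iIndepFun ξ μ) (hlaw : ∀ i, μ.map (ξ i) = P) {f : Ξ → EuclideanSpace ℝ κ}
    (hmean : ∫ y, f y ∂P = 0) (hf : MemLp f 2 P) {n : ℕ} (hn : 0 < n) {M : ℝ} (hM : 0 < M) :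
    μ {ω | M ≤ ‖∑ i ∈ Finset.range n, f (ξ i ω)‖ / Real.sqrt n}
      ≤ ENNReal.ofReal ((∫ y, ‖f y‖ ^ 2 ∂P) / M ^ 2) := by
  set S := fun ω => ∑ i ∈ Finset.range n, f (ξ i ω)
  have hS : MemLp S 2 μ := memLp_finsetSum _ fun i _ => memLp_comp_of_map_eq (hlaw i) hf
  have hsqrt : 0 < Real.sqrt n := Real.sqrt_pos.2 (Nat.cast_pos.2 hn)
  have hsub : {ω | M ≤ ‖S ω‖ / Real.sqrt n} ⊆ {ω | M ^ 2 * n ≤ ‖S ω‖ ^ 2} := fun ω hω => by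
    have : M * Real.sqrt n ≤ ‖S ω‖ := (le_div_iff₀ hsqrt).1 hω
    calc M ^ 2 * n = (M * Real.sqrt n) ^ 2 := by rw [mul_pow, Real.sq_sqrt n.cast_nonneg]
      _ ≤ ‖S ω‖ ^ 2 := pow_le_pow_left₀ (by positivity) this 2
  have hmarkov := mul_meas_ge_le_integral_of_nonneg (Eventually.of_forall fun ω => by positivity)
    ((memLp_two_iff_integrable_sq_norm hS.1).1 hS) (M ^ 2 * n)
  rw [integral_norm_sq_sum_comp_of_iIndepFun hindep hlaw hmean hf n] at hmarkov
  refine (measure_mono hsub).trans ?_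
  rw [← ofReal_measureReal]
  refine ENNReal.ofReal_le_ofReal ?_
  rw [le_div_iff₀ (by positivity)]
  have : (0:ℝ) < n := Nat.cast_pos.2 hn
  nlinarith

theorem boundedInProbability_norm_sum_div_sqrt [IsFiniteMeasure μ] {κ : Type*} [Fintype κ]
    (hindep : iIndepFun ξ μ) (hlaw : ∀ i, μ.map (ξ i) = P) {f : Ξ → EuclideanSpace ℝ κ}
    (hmean : ∫ y, f y ∂P = 0) (hf : MemLp f 2 P) :
    BoundedInProbability μ
      (fun n ω => ‖∑ i ∈ Finset.range n, f (ξ i ω)‖ / Real.sqrt n) atTop := by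
  intro η hη
  have hlim : Tendsto (fun M : ℝ => ENNReal.ofReal ((∫ y, ‖f y‖ ^ 2 ∂P) / M ^ 2)) atTop (𝓝 0) := by
    rw [← ENNReal.ofReal_zero]
    exact ENNReal.tendsto_ofReal
      (tendsto_const_nhds.div_atTop (tendsto_pow_atTop two_ne_zero))
  obtain ⟨M, hM, hMη⟩ := ((eventually_gt_atTop 0).and (hlim.eventually_le_const hη)).exists
  exact ⟨M, (eventually_gt_atTop 0).mono fun n hn =>
    (meas_norm_sum_div_sqrt_ge_le hindep hlaw hmean hf hn hM).trans hMη⟩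

end IIDSums

section Linearization

variable {Ω ι : Type*} [MeasurableSpace Ω] {μ : Measure Ω} {l : Filter ι}

theorem tendstoInMeasure_norm_div_of_isLittleO {E F : Type*} [NormedAddCommGroup E]
    [NormedAddCommGroup F] {g : E → F} {p : E} (hg : g =o[𝓝 p] fun q => q - p)
    {Q : ι → Ω → E} {a : ι → ℝ} (ha : ∀ᶠ i in l, 0 < a i) (ha0 : Tendsto a l (𝓝 0))
    (hQ : BoundedInProbability μ (fun i ω => ‖Q i ω - p‖ / a i) l) :
    TendstoInMeasure μ (fun i ω => ‖g (Q i ω)‖ / a i) l (fun _ => 0) := by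
  rw [tendstoInMeasure_zero_iff]
  intro ε hε η hη
  obtain ⟨M, hM⟩ := hQ η hη
  set M' := max M 1
  have hM' : 0 < M' := lt_max_of_lt_right one_pos
  obtain ⟨δ, hδ, hgδ⟩ := Metric.eventually_nhds_iff.1 (hg.def (div_pos hε hM'))
  filter_upwards [hM, ha, (tendsto_order.1 ha0).2 (δ / M') (div_pos hδ hM')]
    with i hMi hai haδ
  refine (measure_mono fun ω (hω : ε ≤ ‖‖g (Q i ω)‖ / a i‖) =>
    show M ≤ ‖Q i ω - p‖ / a i from ?_).trans hMi
  by_contra! hlt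
  have hQa : ‖Q i ω - p‖ < M' * a i :=
    (div_lt_iff₀ hai).1 (hlt.trans_le (le_max_left M 1))
  have hdist : dist (Q i ω) p < δ := by
    rw [dist_eq_norm]
    calc ‖Q i ω - p‖ < M' * a i := hQa
      _ < M' * (δ / M') := by gcongr
      _ = δ := mul_div_cancel₀ δ hM'.ne'
  have hgQ : ‖g (Q i ω)‖ < ε * a i :=
    calc ‖g (Q i ω)‖ ≤ ε / M' * ‖Q i ω - p‖ := hgδ hdist
      _ < ε / M' * (M' * a i) := by gcongr
      _ = ε * a i := by field_simp
  rw [Real.norm_of_nonneg (div_nonneg (norm_nonneg _) hai.le), le_div_iff₀ hai] at hω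
  linarith

theorem inv_sqrt_add_abs_pos {n : ℕ} (hn : 0 < n) (t : ℝ) : 0 < 1 / Real.sqrt n + |t| := by
  have : 0 < Real.sqrt n := Real.sqrt_pos.2 (Nat.cast_pos.2 hn)
  positivity

theorem tendsto_inv_sqrt_add_abs {lam : ℕ → ℝ} (hlam : Tendsto lam atTop (𝓝 0)) :
    Tendsto (fun n : ℕ => 1 / Real.sqrt n + |lam n|) atTop (𝓝 0) := by
  have hsqrt : Tendsto (fun n : ℕ => 1 / Real.sqrt n) atTop (𝓝 0) := by
    simpa only [one_div, Function.comp_def] using tendsto_inv_atTop_zero.comp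
      (Real.tendsto_sqrt_atTop.comp tendsto_natCast_atTop_atTop)
  simpa using hsqrt.add hlam.abs

theorem div_inv_sqrt_add_abs_le {n : ℕ} (hn : 0 < n) {c : ℝ} (hc : 0 ≤ c) (t : ℝ) :
    c / (1 / Real.sqrt n + |t|) ≤ Real.sqrt n * c := by
  have hsqrt : 0 < Real.sqrt n := Real.sqrt_pos.2 (Nat.cast_pos.2 hn)
  rw [div_le_iff₀ (inv_sqrt_add_abs_pos hn t)]
  calc c = Real.sqrt n * c * (1 / Real.sqrt n) := by field_simp
    _ ≤ Real.sqrt n * c * (1 / Real.sqrt n + |t|) := by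
        gcongr; exact le_add_of_nonneg_right (abs_nonneg t)

theorem abs_div_inv_sqrt_add_abs_le_one (n : ℕ) (t : ℝ) : |t| / (1 / Real.sqrt n + |t|) ≤ 1 :=
  div_le_one_of_le₀ (le_add_of_nonneg_left (by positivity)) (by positivity)

theorem boundedInProbability_norm_div_inv_sqrt_add_abs {Θ : Type*} [NormedAddCommGroup Θ]
    {Z r : ℕ → Ω → Θ} {lam : ℕ → ℝ}
    (hZ : BoundedInProbability μ (fun (n : ℕ) ω => Real.sqrt n * ‖Z n ω‖) atTop)
    (hr : BoundedInProbability μ (fun (n : ℕ) ω => Real.sqrt n * ‖r n ω‖) atTop) :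
    BoundedInProbability μ (fun n ω => ‖((Z n ω + r n ω, lam n) : Θ × ℝ)‖
      / (1 / Real.sqrt n + |lam n|)) atTop := by
  refine ((hZ.add hr).add (boundedInProbability_const 1)).mono
    ((eventually_gt_atTop 0).mono fun n hn ω => ?_)
  have hnorm : ‖((Z n ω + r n ω, lam n) : Θ × ℝ)‖ ≤ ‖Z n ω‖ + ‖r n ω‖ + |lam n| := by
    rw [Prod.norm_def, Real.norm_eq_abs]
    exact max_le (by linarith [norm_add_le (Z n ω) (r n ω), abs_nonneg (lam n)])
      (by linarith [norm_nonneg (Z n ω), norm_nonneg (r n ω)])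
  have ha := inv_sqrt_add_abs_pos hn (lam n)
  calc ‖((Z n ω + r n ω, lam n) : Θ × ℝ)‖ / (1 / Real.sqrt n + |lam n|)
      ≤ ‖Z n ω‖ / (1 / Real.sqrt n + |lam n|) + ‖r n ω‖ / (1 / Real.sqrt n + |lam n|)
        + |lam n| / (1 / Real.sqrt n + |lam n|) := by
        rw [← add_div, ← add_div]; gcongr
    _ ≤ Real.sqrt n * ‖Z n ω‖ + Real.sqrt n * ‖r n ω‖ + 1 := by
        gcongr
        · exact div_inv_sqrt_add_abs_le hn (norm_nonneg _) _
        · exact div_inv_sqrt_add_abs_le hn (norm_nonneg _) _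
        · exact abs_div_inv_sqrt_add_abs_le_one n _

theorem tendstoInMeasure_norm_div_inv_sqrt_add_abs {Θ : Type*} [NormedAddCommGroup Θ]
    {r : ℕ → Ω → Θ} (lam : ℕ → ℝ)
    (hr : TendstoInMeasure μ (fun (n : ℕ) ω => Real.sqrt n * ‖r n ω‖) atTop (fun _ => 0)) :
    TendstoInMeasure μ (fun n ω => ‖r n ω‖ / (1 / Real.sqrt n + |lam n|)) atTop
      (fun _ => 0) := by
  refine hr.of_norm_le_mul (C := 1) ((eventually_gt_atTop 0).mono fun n hn ω => ?_)
  rw [Real.norm_of_nonneg (div_nonneg (norm_nonneg _) (by positivity)), one_mul]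
  exact (div_inv_sqrt_add_abs_le hn (norm_nonneg _) _).trans (Real.le_norm_self _)

theorem tendstoInMeasure_linearization_remainder {E Θ : Type*} [NormedAddCommGroup E] [NormedSpace ℝ E]
    [NormedAddCommGroup Θ] [NormedSpace ℝ Θ] {x : Θ × ℝ → E} {L : Θ × ℝ →L[ℝ] E} {θs : Θ}
    (hx : HasFDerivAt x L (θs, 0)) {Z r : ℕ → Ω → Θ}
    (hZ : BoundedInProbability μ (fun (n : ℕ) ω => Real.sqrt n * ‖Z n ω‖) atTop)
    (hr : TendstoInMeasure μ (fun (n : ℕ) ω => Real.sqrt n * ‖r n ω‖) atTop (fun _ => 0))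
    {lam : ℕ → ℝ} (hlam : Tendsto lam atTop (𝓝 0)) :
    TendstoInMeasure μ (fun n ω => ‖x (θs + Z n ω + r n ω, lam n) - x (θs, 0) - L (Z n ω, lam n)‖
      / (1 / Real.sqrt n + |lam n|)) atTop (fun _ => 0) := by
  set a : ℕ → ℝ := fun n => 1 / Real.sqrt n + |lam n|
  set Q : ℕ → Ω → Θ × ℝ := fun n ω => (θs + Z n ω + r n ω, lam n)
  have hQsub : ∀ n ω, Q n ω - (θs, 0) = (Z n ω + r n ω, lam n) := fun n ω => by
    simp only [Q, Prod.mk_sub_mk, sub_zero, add_assoc, add_sub_cancel_left]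
  have hQ : BoundedInProbability μ (fun n ω => ‖Q n ω - (θs, 0)‖ / a n) atTop := by
    simpa only [hQsub] using
      boundedInProbability_norm_div_inv_sqrt_add_abs (lam := lam) hZ hr.boundedInProbability
  have hlin : TendstoInMeasure μ
      (fun n ω => ‖x (Q n ω) - x (θs, 0) - L (Q n ω - (θs, 0))‖ / a n) atTop (fun _ => 0) :=
    tendstoInMeasure_norm_div_of_isLittleO hx.isLittleO
      ((eventually_gt_atTop 0).mono fun n hn => inv_sqrt_add_abs_pos hn (lam n))
      (tendsto_inv_sqrt_add_abs hlam) hQ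
  have hrem : TendstoInMeasure μ (fun n ω => ‖L (r n ω, 0)‖ / a n) atTop (fun _ => 0) := by
    refine (tendstoInMeasure_norm_div_inv_sqrt_add_abs lam hr).of_norm_le_mul (C := ‖L‖)
      (Eventually.of_forall fun n ω => ?_)
    have hr0 : ‖((r n ω, 0) : Θ × ℝ)‖ = ‖r n ω‖ := by simp [Prod.norm_def]
    rw [Real.norm_of_nonneg (by positivity), Real.norm_of_nonneg (by positivity), ← mul_div_assoc]
    gcongr
    exact hr0 ▸ L.le_opNorm _
  have hsum := hlin.add hrem
  simp only [add_zero] at hsum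
  refine hsum.of_norm_le_mul (C := 1) (Eventually.of_forall fun n ω => ?_)
  have hsplit : x (Q n ω) - x (θs, 0) - L (Z n ω, lam n)
      = (x (Q n ω) - x (θs, 0) - L (Q n ω - (θs, 0))) + L (r n ω, 0) := by
    rw [hQsub, show ((Z n ω + r n ω, lam n) : Θ × ℝ) = (Z n ω, lam n) + (r n ω, 0) by simp,
      map_add]
    abel
  rw [one_mul, hsplit, Real.norm_of_nonneg (by positivity), ← add_div]
  exact (div_le_div_of_nonneg_right (norm_add_le _ _) (by positivity)).trans
    (Real.le_norm_self _)

end Linearization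

theorem ContDiff.differentiable_gradient {F : Type*} [NormedAddCommGroup F]
    [InnerProductSpace ℝ F] [CompleteSpace F] {R : F → ℝ} (hR : ContDiff ℝ 2 R) :
    Differentiable ℝ (gradient R) :=
  (InnerProductSpace.toDual ℝ F).symm.toContinuousLinearEquiv.differentiable.comp
    ((hR.fderiv_right (m := 1) (by norm_num)).differentiable one_ne_zero)

theorem fderiv_regularized_solution_apply {E Θ : Type*} [NormedAddCommGroup E] [NormedSpace ℝ E]
    [NormedAddCommGroup Θ] [NormedSpace ℝ Θ] {G : E × Θ → E} {DG : E × Θ →L[ℝ] E}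
    {h : E → E} {x : Θ × ℝ → E} {xs : E} {θs : Θ} {Hxx : E ≃L[ℝ] E}
    (hDG : HasFDerivAt G DG (xs, θs)) (hHxx : ∀ v, Hxx v = DG (v, 0))
    (hh : DifferentiableAt ℝ h xs) (hx : DifferentiableAt ℝ x (θs, 0)) (hx0 : x (θs, 0) = xs)
    (hxeq : ∀ᶠ p in 𝓝 (θs, (0 : ℝ)), G (x p, p.1) + p.2 • h (x p) = 0) (w : Θ) (t : ℝ) :
    fderiv ℝ x (θs, 0) (w, t) = -Hxx.symm (DG (0, w)) - t • Hxx.symm (h xs) := by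
  set Dx := fderiv ℝ x (θs, 0)
  have hxd : HasFDerivAt x Dx (θs, 0) := hx.hasFDerivAt
  rw [← hx0] at hDG hh
  have hF := (hDG.comp (θs, 0) (hxd.prodMk hasFDerivAt_fst)).add
    ((hasFDerivAt_snd (𝕜 := ℝ)).smul (hh.hasFDerivAt.comp (θs, 0) hxd))
  have hF0 := hF.unique ((hasFDerivAt_const 0 _).congr_of_eventuallyEq hxeq)
  have key : DG (Dx (w, t), w) + t • h xs = 0 := by
    simpa [hx0] using congrArg (fun L : Θ × ℝ →L[ℝ] E => L (w, t)) hF0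
  have hsplit : DG (Dx (w, t), w) = Hxx (Dx (w, t)) + DG (0, w) := by
    rw [hHxx, ← map_add, Prod.mk_add_mk, add_zero, zero_add]
  have hHDx : Hxx (Dx (w, t)) = -DG (0, w) - t • h xs := by
    rw [hsplit] at key
    linear_combination (norm := abel) key
  rw [← Hxx.symm_apply_apply (Dx (w, t)), hHDx, map_sub, map_neg, map_smul]

/-- `DG` is the derivative of `(x, θ) ↦ ∇_x ψ(x, θ)` at `(x*, θ*)`, so that `Hxx v = DG (v, 0)`
is the Hessian `∇²_x ψ` and `DG (0, w) = ∇_{xθ} ψ w`. -/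
theorem regularized_parametric_linearization_general
    {d m : ℕ}
    (ψ : EuclideanSpace ℝ (Fin d) → EuclideanSpace ℝ (Fin m) → ℝ)
    (R : EuclideanSpace ℝ (Fin d) → ℝ)
    (xs : EuclideanSpace ℝ (Fin d)) (θs : EuclideanSpace ℝ (Fin m))
    (DG : EuclideanSpace ℝ (Fin d) × EuclideanSpace ℝ (Fin m) →L[ℝ] EuclideanSpace ℝ (Fin d))
    (hDG : HasFDerivAt
      (fun p : EuclideanSpace ℝ (Fin d) × EuclideanSpace ℝ (Fin m) =>
        gradient (fun y => ψ y p.2) p.1) DG (xs, θs))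
    (Hxx : EuclideanSpace ℝ (Fin d) ≃L[ℝ] EuclideanSpace ℝ (Fin d))
    (hHxx : ∀ v, Hxx v = DG (v, 0))
    (hR : ContDiff ℝ 2 R)
    -- the locally unique C¹ solution x(θ, λ) of the regularized stationarity system
    (x : EuclideanSpace ℝ (Fin m) × ℝ → EuclideanSpace ℝ (Fin d))
    (hx0 : x (θs, 0) = xs)
    (hxC1 : ContDiffAt ℝ 1 x (θs, (0 : ℝ)))
    (hxeq : ∀ᶠ p : EuclideanSpace ℝ (Fin m) × ℝ in 𝓝 (θs, (0 : ℝ)),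
      gradient (fun y => ψ y p.1) (x p) + p.2 • gradient R (x p) = 0)
    -- i.i.d. data with law P
    {Ω : Type*} [MeasurableSpace Ω] {μ : Measure Ω} [IsProbabilityMeasure μ]
    {Ξ : Type*} [MeasurableSpace Ξ] {P : Measure Ξ} [IsProbabilityMeasure P]
    (ξ : ℕ → Ω → Ξ)
    (hindep : iIndepFun ξ μ)
    (hlaw : ∀ i, Measure.map (ξ i) μ = P)
    -- the influence function of the estimator: centered with finite covariance
    (IFθ : Ξ → EuclideanSpace ℝ (Fin m))
    (hIFmean : ∫ y, IFθ y ∂P = 0) (hIFL2 : MemLp IFθ 2 P)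
    -- asymptotically linear estimators θ̂_n
    (θhat r : ℕ → Ω → EuclideanSpace ℝ (Fin m))
    (hθ : ∀ n ω, θhat n ω
      = θs + (n : ℝ)⁻¹ • (∑ i ∈ Finset.range n, IFθ (ξ i ω)) + r n ω)
    (hr : TendstoInMeasure μ (fun (n : ℕ) ω => Real.sqrt n * ‖r n ω‖)
      atTop (fun _ => (0 : ℝ)))
    (lam : ℕ → ℝ) (hlam : Tendsto lam atTop (𝓝 (0 : ℝ))) :
    TendstoInMeasure μ
      (fun (n : ℕ) ω =>
        ‖x (θhat n ω, lam n) - xs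
          + Hxx.symm (DG (0, (n : ℝ)⁻¹ • ∑ i ∈ Finset.range n, IFθ (ξ i ω)))
          + lam n • Hxx.symm (gradient R xs)‖
        / (1 / Real.sqrt n + |lam n|))
      atTop (fun _ => (0 : ℝ)) := by
  have hx : DifferentiableAt ℝ x (θs, 0) := hxC1.differentiableAt one_ne_zero
  have hDx := fderiv_regularized_solution_apply (G := fun p => gradient (fun y => ψ y p.2) p.1)
    hDG hHxx (hR.differentiable_gradient xs) hx hx0 hxeq
  have hZ : BoundedInProbability μ (fun (n : ℕ) ω =>
      Real.sqrt n * ‖(n : ℝ)⁻¹ • ∑ i ∈ Finset.range n, IFθ (ξ i ω)‖) atTop := by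
    refine (boundedInProbability_norm_sum_div_sqrt hindep hlaw hIFmean hIFL2).mono
      (Eventually.of_forall fun n ω => le_of_eq ?_)
    rw [norm_smul, Real.norm_of_nonneg (by positivity), ← mul_assoc, ← div_eq_mul_inv,
      Real.sqrt_div_self, inv_mul_eq_div]
  refine (tendstoInMeasure_linearization_remainder hx.hasFDerivAt hZ hr hlam).congr_left
    fun n => ae_of_all _ fun ω => ?_
  simp only [hθ, hx0, hDx]
  congr 2
  abel

/-- Theorem 5 of the paper: linearization of the regularized parametric-optimization
solution. If `x(θ, λ)` is the locally unique `C¹` solution of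
`∇_x ψ(x, θ) + λ·∇R(x) = 0` through `(x*, θ*, 0)`, the estimators `θ̂_n` are
asymptotically linear with influence function `IF_θ`, and `λ_n → 0`, then
`x̂_n = x(θ̂_n, λ_n)` satisfies
`x̂_n − x* = −(∇²_xψ)⁻¹ ∇_{xθ}ψ·(1/n)Σ IF_θ(ξ_i) − λ_n·(∇²_xψ)⁻¹ ∇R(x*) + s_n`
with `s_n/(n^{−1/2} + |λ_n|) → 0` in probability. Here `DG` is the derivative of
`(x, θ) ↦ ∇_x ψ(x, θ)` at `(x*, θ*)`, `Hxx v = DG (v, 0)` is the (invertible)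
Hessian and `∇_{xθ}ψ w = DG (0, w)`. -/
theorem regularized_parametric_linearization
    {d m : ℕ}
    (ψ : EuclideanSpace ℝ (Fin d) → EuclideanSpace ℝ (Fin m) → ℝ)
    (R : EuclideanSpace ℝ (Fin d) → ℝ)
    (xs : EuclideanSpace ℝ (Fin d)) (θs : EuclideanSpace ℝ (Fin m))
    (hdiff : ∀ᶠ p : EuclideanSpace ℝ (Fin d) × EuclideanSpace ℝ (Fin m) in 𝓝 (xs, θs),
      DifferentiableAt ℝ (fun y => ψ y p.2) p.1)
    (hC1 : ContDiffAt ℝ 1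
      (fun p : EuclideanSpace ℝ (Fin d) × EuclideanSpace ℝ (Fin m) =>
        gradient (fun y => ψ y p.2) p.1) (xs, θs))
    (hstat : gradient (fun y => ψ y θs) xs = 0)
    (DG : EuclideanSpace ℝ (Fin d) × EuclideanSpace ℝ (Fin m) →L[ℝ] EuclideanSpace ℝ (Fin d))
    (hDG : HasFDerivAt
      (fun p : EuclideanSpace ℝ (Fin d) × EuclideanSpace ℝ (Fin m) =>
        gradient (fun y => ψ y p.2) p.1) DG (xs, θs))
    (Hxx : EuclideanSpace ℝ (Fin d) ≃L[ℝ] EuclideanSpace ℝ (Fin d))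
    (hHxx : ∀ v, Hxx v = DG (v, 0))
    (hR : ContDiff ℝ 2 R)
    -- the locally unique C¹ solution x(θ, λ) of the regularized stationarity system
    (x : EuclideanSpace ℝ (Fin m) × ℝ → EuclideanSpace ℝ (Fin d))
    (hx0 : x (θs, 0) = xs)
    (hxC1 : ContDiffAt ℝ 1 x (θs, (0 : ℝ)))
    (hxeq : ∀ᶠ p : EuclideanSpace ℝ (Fin m) × ℝ in 𝓝 (θs, (0 : ℝ)),
      gradient (fun y => ψ y p.1) (x p) + p.2 • gradient R (x p) = 0)
    -- i.i.d. data with law P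
    {Ω : Type*} [MeasurableSpace Ω] {μ : Measure Ω} [IsProbabilityMeasure μ]
    {Ξ : Type*} [MeasurableSpace Ξ] {P : Measure Ξ} [IsProbabilityMeasure P]
    (ξ : ℕ → Ω → Ξ) (hξmeas : ∀ i, Measurable (ξ i))
    (hindep : iIndepFun ξ μ)
    (hlaw : ∀ i, Measure.map (ξ i) μ = P)
    -- the influence function of the estimator: centered with finite covariance
    (IFθ : Ξ → EuclideanSpace ℝ (Fin m)) (hIFmeas : Measurable IFθ)
    (hIFmean : ∫ y, IFθ y ∂P = 0) (hIFL2 : MemLp IFθ 2 P)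
    -- asymptotically linear estimators θ̂_n
    (θhat r : ℕ → Ω → EuclideanSpace ℝ (Fin m))
    (hθ : ∀ n ω, θhat n ω
      = θs + (n : ℝ)⁻¹ • (∑ i ∈ Finset.range n, IFθ (ξ i ω)) + r n ω)
    (hr : TendstoInMeasure μ (fun (n : ℕ) ω => Real.sqrt n * ‖r n ω‖)
      atTop (fun _ => (0 : ℝ)))
    (lam : ℕ → ℝ) (hlam : Tendsto lam atTop (𝓝 (0 : ℝ))) :
    TendstoInMeasure μ
      (fun (n : ℕ) ω =>
        ‖x (θhat n ω, lam n) - xs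
          + Hxx.symm (DG (0, (n : ℝ)⁻¹ • ∑ i ∈ Finset.range n, IFθ (ξ i ω)))
          + lam n • Hxx.symm (gradient R xs)‖
        / (1 / Real.sqrt n + |lam n|))
      atTop (fun _ => (0 : ℝ)) :=
  regularized_parametric_linearization_general ψ R xs θs DG hDG Hxx hHxx hR x hx0 hxC1 hxeq ξ hindep
    hlaw IFθ hIFmean hIFL2 θhat r hθ hr lam hlam
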